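/- arXiv:2006.10287 — 4 statements merged into one kernel-verified Lean document; each statement's English description precedes it below -/
import Mathlib

section
/- If Z is a real random variable with E[|Z − E[Z]|^l] ≤ σ^l for some l > 1 and σ > 0, then Z is s-resilient for the function s(ε) = σ/(1 − ε)^{1/l}. -/
open MeasureTheory ProbabilityTheory

section Defs

variable {Ω : Type*} [MeasureSpace Ω]

/-- Conditional expectation of `Z` given an event `A`: `E[Z·1_A] / Pr[A]`. -/
noncomputable def condMean (Z : Ω → ℝ) (A : Set Ω) : ℝ :=
  (∫ ω in A, Z ω) / (ℙ A).toReal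

/-- `Z` is `s`-resilient from above: for every `ε ∈ [0,1)` and every measurable `B ⊆ ℝ`
with `Pr[Z ∈ B] ≥ 1 − ε`, we have `E[Z | Z ∈ B] − E[Z] ≤ s(ε)`. -/
def ResilientAbove (Z : Ω → ℝ) (s : ℝ → ℝ) : Prop :=
  ∀ ε ∈ Set.Ico (0:ℝ) 1, ∀ B : Set ℝ, MeasurableSet B →
    1 - ε ≤ (ℙ (Z ⁻¹' B)).toReal →
    condMean Z (Z ⁻¹' B) - ∫ ω, Z ω ≤ s ε

/-- `Z` is `s`-resilient from below. -/
def ResilientBelow (Z : Ω → ℝ) (s : ℝ → ℝ) : Prop :=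
  ∀ ε ∈ Set.Ico (0:ℝ) 1, ∀ B : Set ℝ, MeasurableSet B →
    1 - ε ≤ (ℙ (Z ⁻¹' B)).toReal →
    (∫ ω, Z ω) - condMean Z (Z ⁻¹' B) ≤ s ε

/-- `Z` is `s`-resilient if it is `s`-resilient both from above and from below. -/
def Resilient (Z : Ω → ℝ) (s : ℝ → ℝ) : Prop :=
  ResilientAbove Z s ∧ ResilientBelow Z s

end Defs

/-!
With `W = Z - E[Z]`, `E[Z | A] - E[Z] = E[W·1_A] / Pr[A]`, and Hölder's inequality against `1_A`
gives `|E[W·1_A]| ≤ E[|W|^l]^(1/l) · Pr[A]^(1 - 1/l) ≤ σ · Pr[A]^(1 - 1/l)`. Dividing by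
`Pr[A] ≥ 1 - ε` bounds the deviation of the conditional mean, in both directions, by
`σ / (1 - ε)^(1/l)`.
-/

section Holder

variable {α : Type*} [MeasurableSpace α] {μ : Measure α}

lemma memLp_ofReal_of_integrable_abs_rpow {g : α → ℝ} {l : ℝ} (hl : 0 < l)
    (hg : AEStronglyMeasurable g μ) (hint : Integrable (fun x => |g x| ^ l) μ) :
    MemLp g (ENNReal.ofReal l) μ := by
  refine (integrable_norm_rpow_iff hg (by simpa using hl) ENNReal.ofReal_ne_top).1 ?_
  simpa [ENNReal.toReal_ofReal hl.le, Real.norm_eq_abs] using hint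

lemma setIntegral_abs_le_rpow_mul_measureReal {g : α → ℝ} {l : ℝ} (hl : 1 < l)
    (hg : MemLp g (ENNReal.ofReal l) μ) {s : Set α} (hs : μ s ≠ ⊤) :
    ∫ x in s, |g x| ∂μ ≤ (∫ x in s, |g x| ^ l ∂μ) ^ (1 / l) * μ.real s ^ (1 - 1 / l) := by
  have : IsFiniteMeasure (μ.restrict s) := isFiniteMeasure_restrict.2 hs
  have hconj : l.HolderConjugate (l / (l - 1)) :=
    (Real.holderConjugate_iff_eq_conjExponent hl).2 rfl
  have hexp : 1 / (l / (l - 1)) = 1 - 1 / l := by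
    field_simp [(sub_pos.2 hl).ne']
  have := integral_mul_le_Lp_mul_Lq_of_nonneg (μ := μ.restrict s) hconj
    (f := fun x => |g x|) (g := fun _ => (1 : ℝ)) (ae_of_all _ fun _ => abs_nonneg _)
    (ae_of_all _ fun _ => zero_le_one) (by simpa [Real.norm_eq_abs] using (hg.restrict s).norm)
    (memLp_const 1)
  simpa [hexp] using this

end Holder

section CondMean

variable {Ω : Type*} [MeasureSpace Ω] [IsFiniteMeasure (ℙ : Measure Ω)]

lemma condMean_sub_const {Z : Ω → ℝ} (hZ : Integrable Z) {A : Set Ω} (hA : (ℙ A).toReal ≠ 0)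
    (c : ℝ) : condMean Z A - c = condMean (fun ω => Z ω - c) A := by
  simp only [condMean]
  rw [integral_sub hZ.integrableOn (integrable_const c), setIntegral_const, measureReal_def]
  field_simp
  simp

lemma abs_condMean_le_rpow_condMean_abs_rpow {W : Ω → ℝ} {l : ℝ} (hl : 1 < l)
    (hW : MemLp W (ENNReal.ofReal l) ℙ) (A : Set Ω) :
    |condMean W A| ≤ condMean (fun ω => |W ω| ^ l) A ^ (1 / l) := by
  set p := (ℙ A).toReal
  obtain hp | hp : p = 0 ∨ 0 < p := ENNReal.toReal_nonneg.eq_or_lt'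
  · simp only [condMean, p, hp, div_zero, abs_zero]
    positivity
  set M := ∫ ω in A, |W ω| ^ l
  have hM : 0 ≤ M := integral_nonneg fun _ => by positivity
  calc |condMean W A| ≤ (∫ ω in A, |W ω|) / p := by
        rw [condMean, abs_div, abs_of_pos hp]
        gcongr
        exact abs_integral_le_integral_abs
    _ ≤ M ^ (1 / l) * p ^ (1 - 1 / l) / p := by
        gcongr
        exact setIntegral_abs_le_rpow_mul_measureReal hl hW (measure_ne_top _ _)
    _ = (M / p) ^ (1 / l) := by
        rw [Real.div_rpow hM hp.le, Real.rpow_sub hp, Real.rpow_one]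
        field_simp

lemma abs_condMean_sub_le_of_integral_abs_sub_rpow_le {Z : Ω → ℝ} {c l σ t : ℝ}
    (hZ : Integrable Z) (hl : 1 < l) (hσ : 0 ≤ σ)
    (hint : Integrable (fun ω => |Z ω - c| ^ l)) (hmom : ∫ ω, |Z ω - c| ^ l ≤ σ ^ l)
    {A : Set Ω} (ht : 0 < t) (hA : t ≤ (ℙ A).toReal) :
    |condMean Z A - c| ≤ σ / t ^ (1 / l) := by
  have hp : 0 < (ℙ A).toReal := ht.trans_le hA
  have hW : MemLp (fun ω => Z ω - c) (ENNReal.ofReal l) ℙ :=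
    memLp_ofReal_of_integrable_abs_rpow (by linarith) (hZ.1.sub aestronglyMeasurable_const) hint
  have hmom_nonneg : 0 ≤ condMean (fun ω => |Z ω - c| ^ l) A :=
    div_nonneg (integral_nonneg fun _ => by positivity) ENNReal.toReal_nonneg
  have hmom_cond : condMean (fun ω => |Z ω - c| ^ l) A ≤ σ ^ l / t :=
    calc condMean (fun ω => |Z ω - c| ^ l) A ≤ σ ^ l / (ℙ A).toReal :=
          div_le_div_of_nonneg_right
            ((setIntegral_le_integral hint (ae_of_all _ fun _ => by positivity)).trans hmom) hp.le
      _ ≤ σ ^ l / t := div_le_div_of_nonneg_left (by positivity) ht hA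
  calc |condMean Z A - c| = |condMean (fun ω => Z ω - c) A| := by
        rw [condMean_sub_const hZ hp.ne']
    _ ≤ condMean (fun ω => |Z ω - c| ^ l) A ^ (1 / l) :=
        abs_condMean_le_rpow_condMean_abs_rpow hl hW A
    _ ≤ (σ ^ l / t) ^ (1 / l) := Real.rpow_le_rpow hmom_nonneg hmom_cond (by positivity)
    _ = σ / t ^ (1 / l) := by
        rw [Real.div_rpow (by positivity) ht.le, ← Real.rpow_mul hσ,
          mul_one_div_cancel (by positivity), Real.rpow_one]

end CondMean

/-- **Lemma 2, part 2 (bounded moments imply resilience).**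
If `Z` is a real random variable with `E[|Z − E[Z]|^l] ≤ σ^l` for some `l > 1` and `σ > 0`,
then `Z` is `s`-resilient for `s(ε) = σ / (1 − ε)^{1/l}`. -/
theorem bounded_moments_resilient
    {Ω : Type*} [MeasureSpace Ω] [IsProbabilityMeasure (ℙ : Measure Ω)]
    (Z : Ω → ℝ) (hZ : Integrable Z) (l σ : ℝ) (hl : 1 < l) (hσ : 0 < σ)
    (hint : Integrable (fun ω => |Z ω - ∫ ω', Z ω'| ^ l))
    (hmom : (∫ ω, |Z ω - ∫ ω', Z ω'| ^ l) ≤ σ ^ l) :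
    Resilient Z (fun ε => σ / (1 - ε) ^ (1 / l)) := by
  have hdev : ∀ ε ∈ Set.Ico (0 : ℝ) 1, ∀ A : Set Ω, 1 - ε ≤ (ℙ A).toReal →
      |condMean Z A - ∫ ω, Z ω| ≤ σ / (1 - ε) ^ (1 / l) := fun ε hε _ hA =>
    abs_condMean_sub_le_of_integral_abs_sub_rpow_le hZ hl hσ.le hint hmom
      (sub_pos.2 hε.2) hA
  exact ⟨fun ε hε _ _ hB => (abs_sub_le_iff.1 (hdev ε hε _ hB)).1,
    fun ε hε _ _ hB => (abs_sub_le_iff.1 (hdev ε hε _ hB)).2⟩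
end

section
/- For every real p ∈ [0, 1], every integer m ≥ 1, and every integer k with 0 ≤ k < m, Σ_{i=0}^{k} C(m, i) · p^{m−i} · (1 − p)^{i} ≤ (m·(1 − p) + 1)^{k} · p^{m−k}, where C(m, i) is the binomial coefficient. -/
/-- **Binomial tail inequality.**
For every `p ∈ [0,1]`, every integer `m ≥ 1`, and every integer `0 ≤ k < m`,
`Σ_{i=0}^{k} C(m,i) p^{m−i} (1−p)^i ≤ (m(1−p)+1)^k p^{m−k}`. -/
theorem binomial_tail_le
    (p : ℝ) (hp : p ∈ Set.Icc (0:ℝ) 1)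
    (m : ℕ) (hm : 1 ≤ m) (k : ℕ) (hk : k < m) :
    ∑ i ∈ Finset.range (k + 1), (m.choose i : ℝ) * p ^ (m - i) * (1 - p) ^ i ≤
      ((m : ℝ) * (1 - p) + 1) ^ k * p ^ (m - k) := by
  obtain ⟨hp0, hp1⟩ := hp
  have h1p : (0:ℝ) ≤ 1 - p := by linarith
  have hq0 : (0:ℝ) ≤ (m:ℝ) * (1 - p) := by positivity
  revert hk
  induction k with
  | zero => intro _; simp
  | succ k IH =>
    intro hk
    have hk' : k < m := Nat.lt_of_succ_lt hk
    have IH' := IH hk'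
    rw [Finset.sum_range_succ]
    have hmk : m - k = (m - (k+1)) + 1 := by omega
    set n := m - (k+1) with hn
    rw [hmk] at IH'
    set q : ℝ := (m:ℝ) * (1 - p) with hqdef
    have hchoose : (m.choose (k+1) : ℝ) ≤ (m:ℝ)^(k+1) := by
      exact_mod_cast Nat.choose_le_pow m (k+1)
    have key : (q+1)^k * p + (m:ℝ)^(k+1) * (1-p)^(k+1) ≤ (q+1)^(k+1) := by
      have hqk : q^k ≤ (q+1)^k := pow_le_pow_left₀ hq0 (by linarith) k
      have hMk : (0:ℝ) ≤ (q+1)^k := by positivity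
      have hmq : (m:ℝ)^(k+1) * (1-p)^(k+1) = q^(k+1) := (mul_pow _ _ _).symm
      rw [hmq, pow_succ q k, pow_succ (q+1) k]
      nlinarith [mul_le_mul_of_nonneg_right hqk hq0]
    calc (∑ i ∈ Finset.range (k + 1), (m.choose i : ℝ) * p ^ (m - i) * (1 - p) ^ i)
          + (m.choose (k+1) : ℝ) * p ^ n * (1 - p) ^ (k+1)
        ≤ (q+1)^k * p^(n+1) + (m:ℝ)^(k+1) * p^n * (1-p)^(k+1) := by
          gcongr
      _ = ((q+1)^k * p + (m:ℝ)^(k+1) * (1-p)^(k+1)) * p^n := by ring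
      _ ≤ (q+1)^(k+1) * p^n := by
          exact mul_le_mul_of_nonneg_right key (by positivity)
end

section
/- Fix ζ ∈ (0,1), an integer m ≥ 1, and an integer k with 0 ≤ k < m. Define the sequence (v_i) by v_0 = (ζ/(m+1)^k)^{1/(m−k)} and v_{i+1} = (ζ/(m·(1−v_i)+1)^k)^{1/(m−k)} for i ≥ 0. Then for every i ≥ 0 we have 0 < v_i ≤ v_{i+1} < 1; that is, the sequence is monotonically non-decreasing and stays in (0, 1). -/
/-- The iterates `v_i` of Algorithm 1 on inputs `m`, `k`, `ζ`:
`v_0 = (ζ/(m+1)^k)^{1/(m−k)}` and `v_{i+1} = (ζ/(m(1−v_i)+1)^k)^{1/(m−k)}`. -/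
noncomputable def algIter (m k : ℕ) (ζ : ℝ) : ℕ → ℝ
  | 0 => (ζ / ((m : ℝ) + 1) ^ k) ^ (1 / ((m : ℝ) - (k : ℝ)))
  | i + 1 => (ζ / ((m : ℝ) * (1 - algIter m k ζ i) + 1) ^ k) ^ (1 / ((m : ℝ) - (k : ℝ)))

/-- **Monotonicity of the iterates of Algorithm 1.**
For `ζ ∈ (0,1)`, `m ≥ 1`, `0 ≤ k < m`, the sequence `(v_i)` of Algorithm 1 satisfies
`0 < v_i ≤ v_{i+1} < 1` for every `i`. -/
theorem algIter_monotone_mem_Ioo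
    (ζ : ℝ) (hζ : ζ ∈ Set.Ioo (0:ℝ) 1)
    (m : ℕ) (hm : 1 ≤ m) (k : ℕ) (hk : k < m) (i : ℕ) :
    0 < algIter m k ζ i ∧ algIter m k ζ i ≤ algIter m k ζ (i + 1) ∧
      algIter m k ζ (i + 1) < 1 := by
  obtain ⟨hζ0, hζ1⟩ := hζ
  have hmk : (0:ℝ) < (m:ℝ) - k := by
    have : (k:ℝ) < m := by exact_mod_cast hk
    linarith
  have he : 0 < 1 / ((m:ℝ) - k) := by positivity
  -- helper: value in (0,1) for any denominator base d ≥ 1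
  have hval : ∀ d : ℝ, 1 ≤ d →
      0 < (ζ / d ^ k) ^ (1 / ((m:ℝ) - k)) ∧ (ζ / d ^ k) ^ (1 / ((m:ℝ) - k)) < 1 := by
    intro d hd
    have hd0 : (0:ℝ) < d ^ k := by positivity
    have hd1 : (1:ℝ) ≤ d ^ k := one_le_pow₀ hd
    have hq0 : 0 < ζ / d ^ k := by positivity
    have hq1 : ζ / d ^ k < 1 := by
      calc ζ / d ^ k ≤ ζ / 1 := by
            apply div_le_div_of_nonneg_left hζ0.le one_pos hd1
        _ = ζ := div_one ζ
        _ < 1 := hζ1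
    exact ⟨Real.rpow_pos_of_pos hq0 _, Real.rpow_lt_one hq0.le hq1 he⟩
  -- helper: antitone in the denominator base
  have hmono : ∀ d1 d2 : ℝ, 1 ≤ d1 → d1 ≤ d2 →
      (ζ / d2 ^ k) ^ (1 / ((m:ℝ) - k)) ≤ (ζ / d1 ^ k) ^ (1 / ((m:ℝ) - k)) := by
    intro d1 d2 h1 h12
    have hp1 : (0:ℝ) < d1 ^ k := by positivity
    have hple : d1 ^ k ≤ d2 ^ k := pow_le_pow_left₀ (by linarith) h12 k
    have hq : ζ / d2 ^ k ≤ ζ / d1 ^ k :=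
      div_le_div_of_nonneg_left hζ0.le hp1 hple
    have hd2 : (0:ℝ) < d2 := lt_of_lt_of_le one_pos (h1.trans h12)
    exact Real.rpow_le_rpow (by positivity) hq he.le
  -- bounds for every iterate
  have hbnd : ∀ j, 0 < algIter m k ζ j ∧ algIter m k ζ j < 1 := by
    intro j
    induction j with
    | zero => exact hval _ (by linarith [Nat.cast_nonneg (α := ℝ) m])
    | succ n ih =>
      refine hval _ ?_
      have hmn : (0:ℝ) ≤ (m:ℝ) * (1 - algIter m k ζ n) := by
        have := ih.2
        have hm0 : (0:ℝ) ≤ (m:ℝ) := Nat.cast_nonneg m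
        nlinarith
      linarith
  -- monotone step
  have hstep : ∀ j, algIter m k ζ j ≤ algIter m k ζ (j + 1) := by
    intro j
    induction j with
    | zero =>
      show algIter m k ζ 0 ≤ (ζ / ((m:ℝ) * (1 - algIter m k ζ 0) + 1) ^ k) ^ (1 / ((m:ℝ) - k))
      have h0 := hbnd 0
      have hd1 : (1:ℝ) ≤ (m:ℝ) * (1 - algIter m k ζ 0) + 1 := by
        have hm0 : (0:ℝ) ≤ (m:ℝ) := Nat.cast_nonneg m
        nlinarith [h0.2]
      have hle : (m:ℝ) * (1 - algIter m k ζ 0) + 1 ≤ (m:ℝ) + 1 := by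
        have hm0 : (0:ℝ) ≤ (m:ℝ) := Nat.cast_nonneg m
        nlinarith [h0.1]
      exact hmono _ _ hd1 hle
    | succ n ih =>
      show (ζ / ((m:ℝ) * (1 - algIter m k ζ n) + 1) ^ k) ^ (1 / ((m:ℝ) - k)) ≤
        (ζ / ((m:ℝ) * (1 - algIter m k ζ (n+1)) + 1) ^ k) ^ (1 / ((m:ℝ) - k))
      have h1 := hbnd (n + 1)
      have hd1 : (1:ℝ) ≤ (m:ℝ) * (1 - algIter m k ζ (n+1)) + 1 := by
        have hm0 : (0:ℝ) ≤ (m:ℝ) := Nat.cast_nonneg m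
        nlinarith [h1.2]
      have hle : (m:ℝ) * (1 - algIter m k ζ (n+1)) + 1 ≤
          (m:ℝ) * (1 - algIter m k ζ n) + 1 := by
        have hm0 : (0:ℝ) ≤ (m:ℝ) := Nat.cast_nonneg m
        nlinarith
      exact hmono _ _ hd1 hle
  exact ⟨(hbnd i).1, hstep i, (hbnd (i + 1)).2⟩
end

section
/- Fix ζ ∈ (0,1), an integer m ≥ 1, and an integer k with 0 ≤ k < m. Define the sequence (v_i) by v_0 = (ζ/(m+1)^k)^{1/(m−k)} and v_{i+1} = (ζ/(m·(1−v_i)+1)^k)^{1/(m−k)} for i ≥ 0. Then for every i ≥ 0, (m·(1 − v_i) + 1)^{k} · v_i^{m−k} ≤ ζ. -/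
/-- **Invariant of the iterates of Algorithm 1.**
For `ζ ∈ (0,1)`, `m ≥ 1`, `0 ≤ k < m`, every iterate `v_i` of Algorithm 1 satisfies
`(m(1 − v_i) + 1)^k · v_i^{m−k} ≤ ζ`. -/
theorem algIter_invariant
    (ζ : ℝ) (hζ : ζ ∈ Set.Ioo (0:ℝ) 1)
    (m : ℕ) (hm : 1 ≤ m) (k : ℕ) (hk : k < m) (i : ℕ) :
    ((m : ℝ) * (1 - algIter m k ζ i) + 1) ^ k * algIter m k ζ i ^ (m - k) ≤ ζ := by
  obtain ⟨hζ0, hζ1⟩ := hζ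
  have hmk : (1:ℝ) ≤ (m:ℝ) - (k:ℝ) := by
    have : ((k:ℝ) + 1) ≤ (m:ℝ) := by exact_mod_cast hk
    linarith
  set e : ℝ := 1 / ((m:ℝ) - (k:ℝ)) with he
  have he0 : 0 < e := by
    apply div_pos one_pos; linarith
  have hkey : ∀ x : ℝ, 0 ≤ x → (x ^ e) ^ (m - k) = x := by
    intro x hx
    rw [← Real.rpow_natCast (x ^ e) (m - k), ← Real.rpow_mul hx]
    have h1 : e * ((m - k : ℕ) : ℝ) = 1 := by
      rw [Nat.cast_sub hk.le, he]
      field_simp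
    rw [h1, Real.rpow_one]
  -- basic facts about iterates with denominator D ≥ 1
  have hbase : ∀ D : ℝ, 1 ≤ D → 0 < (ζ / D) ^ e ∧ (ζ / D) ^ e < 1 := by
    intro D hD
    have hD0 : 0 < D := lt_of_lt_of_le one_pos hD
    have hx0 : 0 < ζ / D := div_pos hζ0 hD0
    have hx1 : ζ / D < 1 := by
      rw [div_lt_one hD0]; linarith
    exact ⟨Real.rpow_pos_of_pos hx0 e,
      Real.rpow_lt_one hx0.le hx1 he0⟩
  have hm0 : (0:ℝ) ≤ (m:ℝ) := Nat.cast_nonneg m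
  -- main induction: positivity, < 1, and monotonicity
  have main : ∀ j, 0 < algIter m k ζ j ∧ algIter m k ζ j < 1 ∧
      algIter m k ζ j ≤ algIter m k ζ (j+1) := by
    intro j
    induction j with
    | zero =>
      have hD0 : (1:ℝ) ≤ ((m:ℝ) + 1) ^ k := one_le_pow₀ (by linarith)
      obtain ⟨h0, h1⟩ := hbase _ hD0
      rw [show algIter m k ζ 0 = (ζ / ((m:ℝ)+1)^k) ^ e from rfl] at *
      refine ⟨h0, h1, ?_⟩
      rw [show algIter m k ζ 1 = (ζ / ((m:ℝ)*(1 - algIter m k ζ 0)+1)^k) ^ e from rfl]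
      have hD1pos : (0:ℝ) < (m:ℝ) * (1 - algIter m k ζ 0) + 1 := by
        have : (0:ℝ) ≤ (m:ℝ) * (1 - algIter m k ζ 0) := by
          apply mul_nonneg (by positivity)
          rw [show algIter m k ζ 0 = (ζ / ((m:ℝ)+1)^k) ^ e from rfl]
          linarith
        linarith
      have hle : ((m:ℝ) * (1 - algIter m k ζ 0) + 1) ^ k ≤ ((m:ℝ)+1)^k := by
        apply pow_le_pow_left₀ hD1pos.le
        have : (m:ℝ) * (1 - algIter m k ζ 0) ≤ (m:ℝ) * 1 := by
          apply mul_le_mul_of_nonneg_left _ (by positivity)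
          rw [show algIter m k ζ 0 = (ζ / ((m:ℝ)+1)^k) ^ e from rfl]
          linarith
        linarith
      apply Real.rpow_le_rpow (by positivity)
        (div_le_div_of_nonneg_left hζ0.le (by positivity) hle) he0.le
    | succ n ih =>
      obtain ⟨hn0, hn1, hnle⟩ := ih
      have hDpos : (0:ℝ) < (m:ℝ) * (1 - algIter m k ζ n) + 1 := by
        have : (0:ℝ) ≤ (m:ℝ) * (1 - algIter m k ζ n) :=
          mul_nonneg (by positivity) (by linarith)
        linarith
      have hD : (1:ℝ) ≤ ((m:ℝ) * (1 - algIter m k ζ n) + 1) ^ k := by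
        apply one_le_pow₀
        have : (0:ℝ) ≤ (m:ℝ) * (1 - algIter m k ζ n) :=
          mul_nonneg (by positivity) (by linarith)
        linarith
      obtain ⟨h0, h1⟩ := hbase _ hD
      rw [show algIter m k ζ (n+1) = (ζ / ((m:ℝ)*(1 - algIter m k ζ n)+1)^k) ^ e from rfl] at *
      refine ⟨h0, h1, ?_⟩
      rw [show algIter m k ζ (n+2)
        = (ζ / ((m:ℝ)*(1 - algIter m k ζ (n+1))+1)^k) ^ e from rfl]
      have hs0 : 0 < algIter m k ζ (n+1) := by
        rw [show algIter m k ζ (n+1)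
          = (ζ / ((m:ℝ)*(1 - algIter m k ζ n)+1)^k) ^ e from rfl]
        exact h0
      have hs1 : algIter m k ζ (n+1) < 1 := by
        rw [show algIter m k ζ (n+1)
          = (ζ / ((m:ℝ)*(1 - algIter m k ζ n)+1)^k) ^ e from rfl]
        exact h1
      have hD1pos : (0:ℝ) < (m:ℝ) * (1 - algIter m k ζ (n+1)) + 1 := by
        have : (0:ℝ) ≤ (m:ℝ) * (1 - algIter m k ζ (n+1)) :=
          mul_nonneg (by positivity) (by linarith)
        linarith
      have hle : ((m:ℝ) * (1 - algIter m k ζ (n+1)) + 1) ^ k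
          ≤ ((m:ℝ) * (1 - algIter m k ζ n) + 1) ^ k := by
        apply pow_le_pow_left₀ hD1pos.le
        have hv : algIter m k ζ n ≤ algIter m k ζ (n+1) := by
          rw [show algIter m k ζ (n+1)
            = (ζ / ((m:ℝ)*(1 - algIter m k ζ n)+1)^k) ^ e from rfl]
          exact hnle
        have : (m:ℝ) * (1 - algIter m k ζ (n+1)) ≤ (m:ℝ) * (1 - algIter m k ζ n) :=
          mul_le_mul_of_nonneg_left (by linarith) (by positivity)
        linarith
      apply Real.rpow_le_rpow (by positivity)
        (div_le_div_of_nonneg_left hζ0.le (by positivity) hle) he0.le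
  -- conclude the invariant
  have conclude : ∀ D : ℝ, 1 ≤ D →
      ∀ w : ℝ, w = (ζ / D) ^ e → ((m:ℝ) * (1 - w) + 1) ^ k ≤ D →
      ((m:ℝ) * (1 - w) + 1) ^ k * w ^ (m - k) ≤ ζ := by
    intro D hD w hw hle
    have hD0 : 0 < D := lt_of_lt_of_le one_pos hD
    have hx : (0:ℝ) ≤ ζ / D := (div_pos hζ0 hD0).le
    subst hw
    rw [hkey _ hx]
    calc ((m:ℝ) * (1 - (ζ / D) ^ e) + 1) ^ k * (ζ / D)
        ≤ D * (ζ / D) := mul_le_mul_of_nonneg_right hle hx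
      _ = ζ := by field_simp
  cases i with
  | zero =>
    obtain ⟨h0, h1, _⟩ := main 0
    have hv0 : algIter m k ζ 0 = (ζ / ((m:ℝ)+1)^k) ^ e := rfl
    rw [hv0] at h0 h1
    have hD0 : (1:ℝ) ≤ ((m:ℝ) + 1) ^ k := one_le_pow₀ (by linarith)
    apply conclude _ hD0 _ rfl
    apply pow_le_pow_left₀ (by nlinarith) (by nlinarith)
  | succ n =>
    obtain ⟨hn0, hn1, hnle⟩ := main n
    obtain ⟨hs0, hs1, _⟩ := main (n+1)
    have hD : (1:ℝ) ≤ ((m:ℝ) * (1 - algIter m k ζ n) + 1) ^ k := by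
      apply one_le_pow₀
      have : (0:ℝ) ≤ (m:ℝ) * (1 - algIter m k ζ n) :=
        mul_nonneg (by positivity) (by linarith)
      linarith
    have hvs : algIter m k ζ (n+1)
        = (ζ / ((m:ℝ)*(1 - algIter m k ζ n)+1)^k) ^ e := rfl
    apply conclude _ hD _ rfl
    rw [hvs] at hs0 hs1
    apply pow_le_pow_left₀ (by nlinarith) (by nlinarith)
end
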